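/- arXiv:2305.15915 — 3 statements merged into one kernel-verified Lean document; each statement's English description precedes it below -/
import Mathlib

section
/- Let (E, ℰ) be a measurable space, ν a probability measure on E, and m : E × E → ℝ a measurable function for which there exist constants 0 < m₋ ≤ m₊ < ∞ with m₋ ≤ m(x,y) ≤ m₊ for all x, y ∈ E. Define the kernel M by M(x,A) = ∫_A m(x,y) ν(dy). Then assumptions (A1)–(A4) hold with V = ψ = 𝟙 (the constant function 1), K = E, ν as given, and constants α = m₋/2, β = m₋, C = m₊, c = d = m₋/m₊. In particular, a kernel admitting a density bounded above and below with respect to a probability measure satisfies the hypotheses of the generalized Harris theorem. -/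
/-! The density bounds say exactly that `m₋ • ν ≤ M(x, ·) ≤ m₊ • ν` for every `x`. With
`V = ψ = 1`, (A1) and (A2) only concern the mass `M(x, E) ∈ [m₋, m₊]`, (A3) is the minorization
`M(x, ·) ≥ m₋ • ν` together with `M(x, E) ≤ m₊`, and for (A4) one writes
`Mⁿ1(x) = ∫ Mⁿ⁻¹1 dM(x, ·)`, which lies between `m₋ · ν(Mⁿ⁻¹1)` and `m₊ · ν(Mⁿ⁻¹1)` for every `x`. -/

open MeasureTheory ENNReal

/-- The `n`-fold iterate `Mⁿ` of a kernel `M` on `E` (as a map `E → Measure E`):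
`M⁰(x,·) = δ_x` and `Mⁿ⁺¹(x,·) = ∫ Mⁿ(y,·) M(x,dy)`. -/
noncomputable def kIter {E : Type*} [MeasurableSpace E] (M : E → Measure E) :
    ℕ → E → Measure E
  | 0 => fun x => Measure.dirac x
  | n + 1 => fun x => (M x).bind (kIter M n)

/-- Assumption (A1): `MV ≤ αV + C·1_K·ψ`. -/
def HarrisA1 {E : Type*} [MeasurableSpace E] (M : E → Measure E)
    (V ψ : E → ℝ) (K : Set E) (α C : ℝ) : Prop :=
  ∀ x, ∫ y, V y ∂(M x) ≤ α * V x + C * Set.indicator K ψ x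

/-- Assumption (A2): `Mψ ≥ βψ`. -/
def HarrisA2 {E : Type*} [MeasurableSpace E] (M : E → Measure E)
    (ψ : E → ℝ) (β : ℝ) : Prop :=
  ∀ x, β * ψ x ≤ ∫ y, ψ y ∂(M x)

/-- Assumption (A3): for every nonnegative measurable `f` and every `x ∈ K`,
`M(fψ)(x) ≥ c·ν(f)·Mψ(x)`. -/
def HarrisA3 {E : Type*} [MeasurableSpace E] (M : E → Measure E)
    (ψ : E → ℝ) (K : Set E) (ν : Measure E) (c : ℝ) : Prop :=
  ∀ f : E → ℝ≥0∞, Measurable f → ∀ x ∈ K,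
    ENNReal.ofReal c * (∫⁻ y, f y ∂ν) * (∫⁻ y, ENNReal.ofReal (ψ y) ∂(M x))
      ≤ ∫⁻ y, f y * ENNReal.ofReal (ψ y) ∂(M x)

/-- Assumption (A4): for every `n ≥ 1`,
`∫ (Mⁿψ/ψ) dν ≥ d · sup_{x ∈ K} Mⁿψ(x)/ψ(x)`. -/
def HarrisA4 {E : Type*} [MeasurableSpace E] (M : E → Measure E)
    (ψ : E → ℝ) (K : Set E) (ν : Measure E) (d : ℝ) : Prop :=
  ∀ n : ℕ, 1 ≤ n →
    ENNReal.ofReal d *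
        (⨆ x ∈ K, (∫⁻ y, ENNReal.ofReal (ψ y) ∂(kIter M n x)) / ENNReal.ofReal (ψ x))
      ≤ ∫⁻ x, (∫⁻ y, ENNReal.ofReal (ψ y) ∂(kIter M n x)) / ENNReal.ofReal (ψ x) ∂ν

/-- Assumptions (A1)–(A4) of the generalized Harris theorem with data
`(V, ψ, K, ν, α, β, C, c, d)`. -/
def HarrisAssumptions {E : Type*} [MeasurableSpace E] (M : E → Measure E)
    (V ψ : E → ℝ) (K : Set E) (ν : Measure E) (α β C c d : ℝ) : Prop :=
  HarrisA1 M V ψ K α C ∧ HarrisA2 M ψ β ∧ HarrisA3 M ψ K ν c ∧ HarrisA4 M ψ K ν d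

open Set

section DensityBounds

variable {E : Type*} [MeasurableSpace E] {ν : Measure E}

theorem smul_le_withDensity_ofReal {ρ : E → ℝ} {a : ℝ} (h : ∀ y, a ≤ ρ y) :
    ENNReal.ofReal a • ν ≤ ν.withDensity fun y => ENNReal.ofReal (ρ y) := by
  rw [← withDensity_const]
  exact withDensity_mono (Filter.Eventually.of_forall fun y => ofReal_le_ofReal (h y))

theorem withDensity_ofReal_le_smul {ρ : E → ℝ} {b : ℝ} (h : ∀ y, ρ y ≤ b) :
    ν.withDensity (fun y => ENNReal.ofReal (ρ y)) ≤ ENNReal.ofReal b • ν := by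
  rw [← withDensity_const]
  exact withDensity_mono (Filter.Eventually.of_forall fun y => ofReal_le_ofReal (h y))

theorem measurable_withDensity_ofReal [SFinite ν] {m : E → E → ℝ}
    (hm : Measurable fun p : E × E => m p.1 p.2) :
    Measurable fun x => ν.withDensity fun y => ENNReal.ofReal (m x y) := by
  let κ := ProbabilityTheory.Kernel.withDensity (ProbabilityTheory.Kernel.const E ν)
    fun x y => ENNReal.ofReal (m x y)
  have hκ : ∀ x, κ x = ν.withDensity fun y => ENNReal.ofReal (m x y) :=
    ProbabilityTheory.Kernel.withDensity_apply _ hm.ennreal_ofReal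
  exact funext hκ ▸ κ.measurable

end DensityBounds

theorem measurable_kIter {E : Type*} [MeasurableSpace E] {M : E → Measure E}
    (hM : Measurable M) (n : ℕ) : Measurable (kIter M n) := by
  induction n with
  | zero => exact Measure.measurable_dirac
  | succ n ih => exact (Measure.measurable_bind' ih).comp hM

theorem kIter_succ_apply_univ {E : Type*} [MeasurableSpace E] {M : E → Measure E}
    (hM : Measurable M) (n : ℕ) (x : E) :
    kIter M (n + 1) x univ = ∫⁻ y, kIter M n y univ ∂(M x) :=
  Measure.bind_apply MeasurableSet.univ (measurable_kIter hM n).aemeasurable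

theorem ofReal_div_mul_ofReal {a b : ℝ} (hb : 0 < b) :
    ENNReal.ofReal (a / b) * ENNReal.ofReal b = ENNReal.ofReal a := by
  rw [← ofReal_mul' hb.le, div_mul_cancel₀ a hb.ne']

section Sandwich

variable {E : Type*} [MeasurableSpace E] {M : E → Measure E} {ν : Measure E} {a b : ℝ}

theorem ofReal_mul_lintegral_le (hlo : ∀ x, ENNReal.ofReal a • ν ≤ M x) (g : E → ℝ≥0∞) (x : E) :
    ENNReal.ofReal a * ∫⁻ y, g y ∂ν ≤ ∫⁻ y, g y ∂(M x) := by
  simpa only [lintegral_smul_measure, smul_eq_mul] using lintegral_mono' (hlo x) le_rfl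

theorem lintegral_le_ofReal_mul (hhi : ∀ x, M x ≤ ENNReal.ofReal b • ν) (g : E → ℝ≥0∞) (x : E) :
    ∫⁻ y, g y ∂(M x) ≤ ENNReal.ofReal b * ∫⁻ y, g y ∂ν := by
  simpa only [lintegral_smul_measure, smul_eq_mul] using lintegral_mono' (hhi x) le_rfl

variable [IsProbabilityMeasure ν]

theorem ofReal_le_measure_univ (hlo : ∀ x, ENNReal.ofReal a • ν ≤ M x) (x : E) :
    ENNReal.ofReal a ≤ M x univ := by
  simpa using ofReal_mul_lintegral_le hlo 1 x

theorem measure_univ_le_ofReal (hhi : ∀ x, M x ≤ ENNReal.ofReal b • ν) (x : E) :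
    M x univ ≤ ENNReal.ofReal b := by
  simpa using lintegral_le_ofReal_mul hhi 1 x

theorem integral_one_le (hhi : ∀ x, M x ≤ ENNReal.ofReal b • ν) (hb : 0 ≤ b) (x : E) :
    ∫ _, (1 : ℝ) ∂(M x) ≤ b := by
  rw [integral_const, smul_eq_mul, mul_one]
  exact toReal_le_of_le_ofReal hb (measure_univ_le_ofReal hhi x)

theorem le_integral_one (hlo : ∀ x, ENNReal.ofReal a • ν ≤ M x)
    (hhi : ∀ x, M x ≤ ENNReal.ofReal b • ν) (x : E) :
    a ≤ ∫ _, (1 : ℝ) ∂(M x) := by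
  have hfin : M x univ ≠ ⊤ := ne_top_of_le_ne_top ofReal_ne_top (measure_univ_le_ofReal hhi x)
  rw [integral_const, smul_eq_mul, mul_one]
  exact (ofReal_le_iff_le_toReal hfin).1 (ofReal_le_measure_univ hlo x)

theorem harrisA1_one (hhi : ∀ x, M x ≤ ENNReal.ofReal b • ν) (hb : 0 ≤ b) {α : ℝ} (hα : 0 ≤ α) :
    HarrisA1 M (fun _ => 1) (fun _ => 1) univ α b := by
  intro x
  simp only [indicator_univ, mul_one]
  linarith [integral_one_le hhi hb x]

theorem harrisA2_one (hlo : ∀ x, ENNReal.ofReal a • ν ≤ M x)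
    (hhi : ∀ x, M x ≤ ENNReal.ofReal b • ν) : HarrisA2 M (fun _ => 1) a := by
  intro x
  simpa only [mul_one] using le_integral_one hlo hhi x

theorem harrisA3_one (hlo : ∀ x, ENNReal.ofReal a • ν ≤ M x)
    (hhi : ∀ x, M x ≤ ENNReal.ofReal b • ν) (hb : 0 < b) :
    HarrisA3 M (fun _ => 1) univ ν (a / b) := by
  intro f _ x _
  simp only [ofReal_one, mul_one, lintegral_one]
  calc ENNReal.ofReal (a / b) * (∫⁻ y, f y ∂ν) * M x univ
      ≤ ENNReal.ofReal (a / b) * (∫⁻ y, f y ∂ν) * ENNReal.ofReal b := by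
        gcongr; exact measure_univ_le_ofReal hhi x
    _ = ENNReal.ofReal a * ∫⁻ y, f y ∂ν := by rw [mul_right_comm, ofReal_div_mul_ofReal hb]
    _ ≤ ∫⁻ y, f y ∂(M x) := ofReal_mul_lintegral_le hlo f x

theorem harrisA4_one (hM : Measurable M) (hlo : ∀ x, ENNReal.ofReal a • ν ≤ M x)
    (hhi : ∀ x, M x ≤ ENNReal.ofReal b • ν) (hb : 0 < b) :
    HarrisA4 M (fun _ => 1) univ ν (a / b) := by
  rintro (_ | n) hn
  · omega
  simp only [ofReal_one, div_one, lintegral_one, mem_univ, iSup_pos]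
  set I := ∫⁻ y, kIter M n y univ ∂ν
  have hsup : ⨆ x, kIter M (n + 1) x univ ≤ ENNReal.ofReal b * I := iSup_le fun x => by
    rw [kIter_succ_apply_univ hM]
    exact lintegral_le_ofReal_mul hhi _ x
  have hint : ENNReal.ofReal a * I ≤ ∫⁻ x, kIter M (n + 1) x univ ∂ν := by
    simpa only [← kIter_succ_apply_univ hM, lintegral_const, measure_univ, mul_one] using
      lintegral_mono (μ := ν) fun x => ofReal_mul_lintegral_le hlo (kIter M n · univ) x
  calc ENNReal.ofReal (a / b) * ⨆ x, kIter M (n + 1) x univ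
      ≤ ENNReal.ofReal (a / b) * (ENNReal.ofReal b * I) := by gcongr
    _ = ENNReal.ofReal a * I := by rw [← mul_assoc, ofReal_div_mul_ofReal hb]
    _ ≤ ∫⁻ x, kIter M (n + 1) x univ ∂ν := hint

end Sandwich

/-- **Kernels with bounded density satisfy the Harris assumptions.** If
`M(x,A) = ∫_A m(x,y) ν(dy)` with `0 < m₋ ≤ m(x,y) ≤ m₊ < ∞`, then (A1)–(A4) hold with
`V = ψ = 𝟙`, `K = E`, `ν` as given, and constants `α = m₋/2`, `β = m₋`, `C = m₊`,
`c = d = m₋/m₊`. -/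
theorem bounded_density_harris
    {E : Type*} [MeasurableSpace E]
    (ν : Measure E) (hν : IsProbabilityMeasure ν)
    (m : E → E → ℝ) (hm : Measurable fun p : E × E => m p.1 p.2)
    (mlo mhi : ℝ) (hlo : 0 < mlo) (hlohi : mlo ≤ mhi)
    (hbound : ∀ x y, mlo ≤ m x y ∧ m x y ≤ mhi) :
    HarrisAssumptions (fun x => ν.withDensity fun y => ENNReal.ofReal (m x y))
      (fun _ => (1 : ℝ)) (fun _ => (1 : ℝ)) Set.univ ν
      (mlo / 2) mlo mhi (mlo / mhi) (mlo / mhi) := by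
  have hmhi : 0 < mhi := hlo.trans_le hlohi
  have hsand_lo := fun x => smul_le_withDensity_ofReal (ν := ν) fun y => (hbound x y).1
  have hsand_hi := fun x => withDensity_ofReal_le_smul (ν := ν) fun y => (hbound x y).2
  exact ⟨harrisA1_one hsand_hi hmhi.le (half_pos hlo).le, harrisA2_one hsand_lo hsand_hi,
    harrisA3_one hsand_lo hsand_hi hmhi,
    harrisA4_one (measurable_withDensity_ofReal hm) hsand_lo hsand_hi hmhi⟩
end

section
/- Let a, b > 0 with a < b, and let A = [[−b, 0],[a, −a]]. For every probability row vector μ₀ = (μ₁, μ₂) with μ₂ > 0, the conditional distribution μ_t = μ₀·exp(tA) / ((μ₀·exp(tA))·(1,1)ᵀ) converges, as t → ∞, to the quasi-stationary distribution (a/b, (b−a)/b). -/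
/-! For `p ≠ q` the lower-triangular matrix `!![p, 0; r, q]` is diagonalisable, which gives
`exp (t • A)` in closed form. Multiplied by `e^{at}`, the law `μ₀ ᵥ* exp (t • A)` becomes
`(μ₀ 0 x + μ₀ 1 a (1 - x) / (b - a), μ₀ 1)` with `x = e^{-(b-a)t} → 0` because `a < b`.
Normalising to mass one ignores the factor `e^{at}` and is continuous at the limit
`μ₀ 1 / (b - a) • (a, b - a)`, whose mass `μ₀ 1 b / (b - a)` is nonzero. -/

open Matrix NormedSpace Filter Topology

theorem Matrix.exp_lowerTriangular_fin_two {𝕂 : Type*} [NormedField 𝕂] [NormedAlgebra ℚ 𝕂]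
    [CompleteSpace 𝕂] {p q : 𝕂} (r : 𝕂) (hpq : p ≠ q) :
    exp !![p, 0; r, q] = !![exp p, 0; r * (exp p - exp q) / (p - q), exp q] := by
  have hpq' : p - q ≠ 0 := sub_ne_zero.mpr hpq
  -- the columns of `P` are eigenvectors for the eigenvalues `p` and `q`
  let P : Matrix (Fin 2) (Fin 2) 𝕂 := !![p - q, 0; r, 1]
  let P' : Matrix (Fin 2) (Fin 2) 𝕂 := !![(p - q)⁻¹, 0; -r / (p - q), 1]
  have hPP' : P * P' = 1 := by
    rw [mul_fin_two, one_fin_two]; congr <;> field_simp <;> ring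
  have hP'P : P' * P = 1 := by
    rw [mul_fin_two, one_fin_two]; congr <;> field_simp <;> ring
  have hdiag : !![p, 0; r, q] = P * diagonal ![p, q] * P' := by
    rw [diagonal_vec2, mul_fin_two, mul_fin_two]; congr <;> field_simp <;> ring
  have := exp_units_conj ⟨P, P', hPP', hP'P⟩ (diagonal ![p, q])
  rw [Units.val_mk, Units.inv_mk, Units.val_mk, ← hdiag] at this
  rw [this, exp_diagonal, Pi.exp_def, diagonal_fin_two, mul_fin_two, mul_fin_two]
  simp only [cons_val_zero, cons_val_one, cons_val_fin_one]
  congr <;> field_simp <;> ring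

section NormalizeMass

variable {ι 𝕜 : Type*} [Fintype ι] [NormedField 𝕜]

def normalizeMass (v : ι → 𝕜) : ι → 𝕜 := (∑ i, v i)⁻¹ • v

theorem normalizeMass_smul {c : 𝕜} (hc : c ≠ 0) (v : ι → 𝕜) :
    normalizeMass (c • v) = normalizeMass v := by
  simp only [normalizeMass, Pi.smul_apply, smul_eq_mul, ← Finset.mul_sum, smul_smul,
    _root_.mul_inv_rev, mul_assoc, inv_mul_cancel₀ hc, mul_one]

theorem Filter.Tendsto.normalizeMass {α : Type*} {l : Filter α} {v : α → ι → 𝕜} {w : ι → 𝕜}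
    (hv : Tendsto v l (𝓝 w)) (hw : ∑ i, w i ≠ 0) :
    Tendsto (fun x => normalizeMass (v x)) l (𝓝 (normalizeMass w)) :=
  ((tendsto_finsetSum _ fun i _ => tendsto_pi_nhds.1 hv i).inv₀ hw).smul hv

end NormalizeMass

def twoStateGenerator (a b : ℝ) : Matrix (Fin 2) (Fin 2) ℝ := !![-b, 0; a, -a]

theorem exp_smul_twoStateGenerator {a b t : ℝ} (hab : a ≠ b) (ht : t ≠ 0) :
    exp (t • twoStateGenerator a b) = !![Real.exp (-(b * t)), 0;
      a * (Real.exp (-(a * t)) - Real.exp (-(b * t))) / (b - a), Real.exp (-(a * t))] := by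
  have hsmul : t • twoStateGenerator a b = !![-(b * t), 0; a * t, -(a * t)] := by
    ext i j; fin_cases i <;> fin_cases j <;> simp [twoStateGenerator, mul_comm]
  have hne : -(b * t) ≠ -(a * t) := by
    simpa [mul_right_cancel_iff_of_pos, mul_left_inj' ht] using hab.symm
  rw [hsmul, exp_lowerTriangular_fin_two _ hne, ← Real.exp_eq_exp_ℝ]
  have hentry : a * t * (Real.exp (-(b * t)) - Real.exp (-(a * t))) / (-(b * t) - -(a * t)) =
      a * (Real.exp (-(a * t)) - Real.exp (-(b * t))) / (b - a) := by
    rw [div_eq_div_iff (sub_ne_zero.mpr hne) (sub_ne_zero.mpr hab.symm)]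
    ring
  rw [hentry]

theorem exp_mul_smul_vecMul_exp_smul_twoStateGenerator {a b t : ℝ} (hab : a ≠ b) (ht : t ≠ 0)
    (μ : Fin 2 → ℝ) :
    Real.exp (a * t) • (μ ᵥ* exp (t • twoStateGenerator a b)) =
      ![μ 0 * Real.exp (-((b - a) * t)) + μ 1 * (a * (1 - Real.exp (-((b - a) * t))) / (b - a)),
        μ 1] := by
  have hba : b - a ≠ 0 := sub_ne_zero.mpr hab.symm
  have hbt : Real.exp (-(b * t)) = Real.exp (-(a * t)) * Real.exp (-((b - a) * t)) := by
    rw [← Real.exp_add]; ring_nf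
  have hat : Real.exp (a * t) = (Real.exp (-(a * t)))⁻¹ := by rw [Real.exp_neg, inv_inv]
  rw [exp_smul_twoStateGenerator hab ht, hbt, hat]
  ext i
  fin_cases i <;> simp [vecHead, vecTail] <;> field_simp

theorem tendsto_exp_mul_smul_vecMul_exp_smul_twoStateGenerator {a b : ℝ} (hab : a < b)
    (μ : Fin 2 → ℝ) :
    Tendsto (fun t => Real.exp (a * t) • (μ ᵥ* exp (t • twoStateGenerator a b))) atTop
      (𝓝 ((μ 1 / (b - a)) • ![a, b - a])) := by
  have hdecay : Tendsto (fun t => Real.exp (-((b - a) * t))) atTop (𝓝 0) :=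
    Real.tendsto_exp_neg_atTop_nhds_zero.comp (tendsto_id.const_mul_atTop (sub_pos.2 hab))
  have hcont : Continuous fun x => ![μ 0 * x + μ 1 * (a * (1 - x) / (b - a)), μ 1] := by
    fun_prop
  have hlim := (hcont.tendsto 0).comp hdecay
  have hval :
      ![μ 0 * 0 + μ 1 * (a * (1 - 0) / (b - a)), μ 1] = (μ 1 / (b - a)) • ![a, b - a] := by
    have hba : b - a ≠ 0 := (sub_pos.2 hab).ne'
    ext i; fin_cases i <;> simp <;> field_simp
  rw [hval] at hlim
  refine hlim.congr' ?_
  filter_upwards [eventually_gt_atTop 0] with t ht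
  exact (exp_mul_smul_vecMul_exp_smul_twoStateGenerator hab.ne ht.ne' μ).symm

theorem two_state_conditional_convergence_general (a b : ℝ) (hb : 0 < b) (hab : a < b)
    (A : Matrix (Fin 2) (Fin 2) ℝ) (hA : A = !![-b, 0; a, -a]) :
    ∀ μ₀ : Fin 2 → ℝ, (∀ i, 0 ≤ μ₀ i) → μ₀ 0 + μ₀ 1 = 1 → 0 < μ₀ 1 →
      Filter.Tendsto
        (fun t : ℝ =>
          ((μ₀ ᵥ* NormedSpace.exp (t • A)) 0 + (μ₀ ᵥ* NormedSpace.exp (t • A)) 1)⁻¹ •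
            (μ₀ ᵥ* NormedSpace.exp (t • A)))
        Filter.atTop (nhds ![a / b, (b - a) / b]) := by
  change A = twoStateGenerator a b at hA
  subst hA
  intro μ₀ _ _ hμ₁
  have hscale : μ₀ 1 / (b - a) ≠ 0 := (div_pos hμ₁ (sub_pos.2 hab)).ne'
  have hqsd : normalizeMass ![a, b - a] = ![a / b, (b - a) / b] := by
    ext i; fin_cases i <;> simp [normalizeMass, Fin.sum_univ_two] <;> field_simp
  have hlim := (tendsto_exp_mul_smul_vecMul_exp_smul_twoStateGenerator hab μ₀).normalizeMass
    (by simpa [Fin.sum_univ_two, ← mul_add] using mul_ne_zero hscale hb.ne')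
  rw [normalizeMass_smul hscale, hqsd] at hlim
  refine hlim.congr fun t => ?_
  rw [normalizeMass_smul (Real.exp_pos _).ne', normalizeMass, Fin.sum_univ_two]

/-- **Convergence of the conditional law of the two-state killed chain when `a < b`.**
For every initial probability row vector `μ₀ = (μ₁, μ₂)` with `μ₂ > 0`, the conditional
distribution `μ_t = μ₀·exp(tA) / (μ₀·exp(tA)·(1,1)ᵀ)` converges, as `t → ∞`, to the
quasi-stationary distribution `(a/b, (b−a)/b)`. -/
theorem two_state_conditional_convergence (a b : ℝ) (ha : 0 < a) (hb : 0 < b) (hab : a < b)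
    (A : Matrix (Fin 2) (Fin 2) ℝ) (hA : A = !![-b, 0; a, -a]) :
    ∀ μ₀ : Fin 2 → ℝ, (∀ i, 0 ≤ μ₀ i) → μ₀ 0 + μ₀ 1 = 1 → 0 < μ₀ 1 →
      Filter.Tendsto
        (fun t : ℝ =>
          ((μ₀ ᵥ* NormedSpace.exp (t • A)) 0 + (μ₀ ᵥ* NormedSpace.exp (t • A)) 1)⁻¹ •
            (μ₀ ᵥ* NormedSpace.exp (t • A)))
        Filter.atTop (nhds ![a / b, (b - a) / b]) :=
  two_state_conditional_convergence_general a b hb hab A hA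
end

section
/- Let d ≥ 1, let V : ℝᵈ → ℝ be C¹ and bounded below, and suppose there exists a C¹ map G : ℝᵈ → ℝᵈ such that G and its derivative are bounded on ℝᵈ and ∇V(x)·G(x) → +∞ as |x| → +∞. Then V(x) → +∞ as |x| → +∞. -/
/-!
Let `⟪∇V, G⟫ ≥ 1` outside the ball of radius `R` and `‖G‖ ≤ K`. Follow the flow of `G`
backwards from a point `x` for time `T = (‖x‖ - R) / K`: the trajectory moves at speed at most
`K`, so it never enters the ball of radius `R`, and along it `V` therefore decreases at rate at
least `1`. Hence `V x ≥ inf V + (‖x‖ - R) / K`. The flow exists globally by Picard–Lindelöf,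
since the bound on `DG` makes `G` Lipschitz.
-/

open Filter Set
open scoped NNReal

section BackwardFlow

variable {E : Type*} [NormedAddCommGroup E]

theorem exists_backward_integral_curve [NormedSpace ℝ E] [CompleteSpace E] {G : E → E}
    {K L : ℝ≥0} (hG : ∀ y, ‖G y‖ ≤ K) (hGL : LipschitzWith L G) (x : E) {T : ℝ} (hT : 0 ≤ T) :
    ∃ f : ℝ → E, f 0 = x ∧ ∀ t ∈ Icc (-T) 0, HasDerivWithinAt f (G (f t)) (Icc (-T) 0) t :=
  IsPicardLindelof.exists_eq_forall_mem_Icc_hasDerivWithinAt₀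
    (IsPicardLindelof.of_time_independent (tmin := -T) (tmax := 0)
      (t₀ := ⟨0, neg_nonpos.2 hT, le_rfl⟩) (a := ⟨K * T, by positivity⟩)
      (fun y _ => hG y) hGL.lipschitzOnWith (by simp [hT]; rfl))

variable [InnerProductSpace ℝ E] [CompleteSpace E]

theorem add_sub_le_comp_of_one_le_inner_gradient {V : E → ℝ} (hV : Differentiable ℝ V)
    {G : E → E} {f : ℝ → E} {a b : ℝ} (hab : a ≤ b)
    (hf : ∀ t ∈ Icc a b, HasDerivWithinAt f (G (f t)) (Icc a b) t)
    (hVG : ∀ t ∈ Icc a b, 1 ≤ inner ℝ (gradient V (f t)) (G (f t))) :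
    V (f a) + (b - a) ≤ V (f b) := by
  have hderiv : ∀ t ∈ Icc a b, HasDerivWithinAt (fun s => V (f s) - s)
      (inner ℝ (gradient V (f t)) (G (f t)) - 1) (Icc a b) t := by
    intro t ht
    have hcomp := (hV (f t)).hasGradientAt.hasFDerivAt.comp_hasDerivWithinAt t (hf t ht)
    rw [InnerProductSpace.toDual_apply_apply] at hcomp
    exact hcomp.sub (hasDerivWithinAt_id t _)
  have hmono : MonotoneOn (fun s => V (f s) - s) (Icc a b) := by
    refine monotoneOn_of_hasDerivWithinAt_nonneg (convex_Icc a b)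
      (f' := fun t => inner ℝ (gradient V (f t)) (G (f t)) - 1)
      (fun t ht => (hderiv t ht).continuousWithinAt) (fun t ht => ?_) (fun t ht => ?_)
    all_goals rw [interior_Icc] at ht
    · exact (hderiv t (Ioo_subset_Icc_self ht)).mono interior_subset
    · exact sub_nonneg.2 (hVG t (Ioo_subset_Icc_self ht))
  linarith [hmono (left_mem_Icc.2 hab) (right_mem_Icc.2 hab) hab]

theorem exists_add_le_of_one_le_inner_gradient {V : E → ℝ} (hV : Differentiable ℝ V)
    {G : E → E} {K L : ℝ≥0} (hG : ∀ y, ‖G y‖ ≤ K) (hGL : LipschitzWith L G) {R : ℝ}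
    (hR : ∀ y, R ≤ ‖y‖ → 1 ≤ inner ℝ (gradient V y) (G y)) {x : E} {T : ℝ} (hT : 0 ≤ T)
    (hx : R + K * T ≤ ‖x‖) :
    ∃ y, V y + T ≤ V x := by
  obtain ⟨f, hf0, hf⟩ := exists_backward_integral_curve hG hGL x hT
  have hT0 : -T ≤ 0 := neg_nonpos.2 hT
  have hfar : ∀ t ∈ Icc (-T) (0 : ℝ), R ≤ ‖f t‖ := by
    intro t ht
    have hmove : ‖f t - x‖ ≤ K * ‖t - 0‖ := hf0 ▸
      (convex_Icc _ _).norm_image_sub_le_of_norm_hasDerivWithin_le hf (fun s _ => hG (f s))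
        (right_mem_Icc.2 hT0) ht
    have ht_abs : ‖t - 0‖ ≤ T := by
      rw [sub_zero, Real.norm_eq_abs, abs_le]
      exact ⟨ht.1, ht.2.trans hT⟩
    have hKT : (K : ℝ) * ‖t - 0‖ ≤ K * T := mul_le_mul_of_nonneg_left ht_abs K.coe_nonneg
    linarith [norm_sub_norm_le x (f t), norm_sub_rev x (f t)]
  refine ⟨f (-T), ?_⟩
  have := add_sub_le_comp_of_one_le_inner_gradient hV hT0 hf fun t ht => hR _ (hfar t ht)
  rwa [hf0, zero_sub, neg_neg] at this

theorem add_div_le_of_one_le_inner_gradient {V : E → ℝ} (hV : Differentiable ℝ V) {c : ℝ}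
    (hc : ∀ y, c ≤ V y) {G : E → E} {K L : ℝ≥0} (hK : 0 < K) (hG : ∀ y, ‖G y‖ ≤ K)
    (hGL : LipschitzWith L G) {R : ℝ} (hR : ∀ y, R ≤ ‖y‖ → 1 ≤ inner ℝ (gradient V y) (G y))
    {x : E} (hx : R ≤ ‖x‖) :
    c + (‖x‖ - R) / K ≤ V x := by
  have hK' : (0 : ℝ) < K := hK
  obtain ⟨y, hy⟩ := exists_add_le_of_one_le_inner_gradient hV hG hGL hR
    (div_nonneg (sub_nonneg.2 hx) hK'.le) (by rw [mul_div_cancel₀ _ hK'.ne']; linarith)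
  linarith [hc y]

end BackwardFlow

theorem confining_potential_of_Av1_Av2_general (d : ℕ)
    (V : EuclideanSpace ℝ (Fin d) → ℝ) (hV : ContDiff ℝ 1 V)
    (hVbdd : BddBelow (Set.range V))
    (G : EuclideanSpace ℝ (Fin d) → EuclideanSpace ℝ (Fin d)) (hG : ContDiff ℝ 1 G)
    (hGbdd : ∃ CG : ℝ, ∀ x, ‖G x‖ ≤ CG)
    (hG'bdd : ∃ CG' : ℝ, ∀ x, ‖fderiv ℝ G x‖ ≤ CG')
    (hVG : Tendsto (fun x => (inner ℝ (gradient V x) (G x) : ℝ))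
      (Filter.comap (fun x => ‖x‖) atTop) atTop) :
    Tendsto V (Filter.comap (fun x => ‖x‖) atTop) atTop := by
  obtain ⟨c, hc⟩ := hVbdd
  obtain ⟨CG, hCG⟩ := hGbdd
  obtain ⟨CG', hCG'⟩ := hG'bdd
  set K : ℝ≥0 := (max CG 1).toNNReal
  have hK : 0 < K := Real.toNNReal_pos.2 (lt_max_of_lt_right one_pos)
  have hGK : ∀ y, ‖G y‖ ≤ K := fun y =>
    (hCG y).trans ((le_max_left _ _).trans (Real.le_coe_toNNReal _))
  have hGL : LipschitzWith CG'.toNNReal G :=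
    lipschitzWith_of_nnnorm_fderiv_le (hG.differentiable one_ne_zero) fun y =>
      norm_toNNReal.symm.trans_le (Real.toNNReal_le_toNNReal (hCG' y))
  obtain ⟨R, hR⟩ := eventually_atTop.1 (eventually_comap.1
    (hVG.eventually (eventually_ge_atTop 1)))
  have hgrowth : Tendsto (fun r : ℝ => c + (r - R) / K) atTop atTop :=
    tendsto_atTop_add_const_left _ _
      ((tendsto_atTop_add_const_right _ _ tendsto_id).atTop_div_const (by exact_mod_cast hK))
  refine tendsto_atTop_mono' _ ?_ (hgrowth.comp tendsto_comap)
  filter_upwards [tendsto_comap.eventually (eventually_ge_atTop R)] with x hx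
  exact add_div_le_of_one_le_inner_gradient (hV.differentiable one_ne_zero)
    (fun y => hc ⟨y, rfl⟩) hK hGK hGL (fun y hy => hR _ hy y rfl) hx

/-- **(Av1) + (Av2) imply that the potential is confining.** If `V : ℝᵈ → ℝ` is `C¹` and
bounded below, and there is a `C¹` map `G : ℝᵈ → ℝᵈ` with `G` and its derivative bounded and
`∇V(x)·G(x) → +∞` as `|x| → +∞`, then `V(x) → +∞` as `|x| → +∞`. -/
theorem confining_potential_of_Av1_Av2 (d : ℕ) (hd : 1 ≤ d)
    (V : EuclideanSpace ℝ (Fin d) → ℝ) (hV : ContDiff ℝ 1 V)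
    (hVbdd : BddBelow (Set.range V))
    (G : EuclideanSpace ℝ (Fin d) → EuclideanSpace ℝ (Fin d)) (hG : ContDiff ℝ 1 G)
    (hGbdd : ∃ CG : ℝ, ∀ x, ‖G x‖ ≤ CG)
    (hG'bdd : ∃ CG' : ℝ, ∀ x, ‖fderiv ℝ G x‖ ≤ CG')
    (hVG : Tendsto (fun x => (inner ℝ (gradient V x) (G x) : ℝ))
      (Filter.comap (fun x => ‖x‖) atTop) atTop) :
    Tendsto V (Filter.comap (fun x => ‖x‖) atTop) atTop :=
  confining_potential_of_Av1_Av2_general d V hV hVbdd G hG hGbdd hG'bdd hVG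
end
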